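/- arXiv:2303.15338 — 2 statements merged into one kernel-verified Lean document; each statement's English description precedes it below -/
import Mathlib

section
/- Let x₀ ≥ 1/√2 and let Ψ : [x₀, ∞) → ℝ be smooth with Ψ(x₀) = 0, Ψ(x) > 0 for x > x₀, and Ψ'(x) > 0 for all x ≥ x₀. Let 0 < c < 1 and define F : [c, ∞) × (x₀, ∞) → ℝ by F(a, x) = ( −(1 − Ψ(x)) a + √(a² + Ψ(x)/x²) ) / Ψ(x). Then F is Lipschitz in its first argument: for all a ≥ b ≥ c and x > x₀, −(1/c²)(a − b) ≤ F(a, x) − F(b, x) ≤ a − b. -/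
set_option maxHeartbeats 1000000

/-- Lipschitz estimate in the first argument for the function
`F(a, x) = (−(1 − Ψ(x)) a + √(a² + Ψ(x)/x²)) / Ψ(x)`, where `x₀ ≥ 1/√2`,
`Ψ` is smooth with `Ψ(x₀) = 0`, `Ψ > 0` on `(x₀, ∞)` and `Ψ' > 0` on `[x₀, ∞)`,
and `0 < c < 1`: for all `a ≥ b ≥ c` and `x > x₀`,
`−(1/c²)(a − b) ≤ F(a, x) − F(b, x) ≤ a − b`. -/
theorem F_lipschitz_first_argument (x₀ c : ℝ) (Ψ : ℝ → ℝ)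
    (hx₀ : 1 / Real.sqrt 2 ≤ x₀) (hΨ : ContDiff ℝ (⊤ : ℕ∞) Ψ) (hΨ0 : Ψ x₀ = 0)
    (hΨpos : ∀ x, x₀ < x → 0 < Ψ x) (hΨ' : ∀ x, x₀ ≤ x → 0 < deriv Ψ x)
    (hc0 : 0 < c) (hc1 : c < 1)
    (F : ℝ → ℝ → ℝ)
    (hF : ∀ a x, F a x = (-(1 - Ψ x) * a + Real.sqrt (a ^ 2 + Ψ x / x ^ 2)) / Ψ x) :
    ∀ a b x, c ≤ b → b ≤ a → x₀ < x →
      -(1 / c ^ 2) * (a - b) ≤ F a x - F b x ∧ F a x - F b x ≤ a - b := by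
  intro a b x hcb hba hx
  have hs2 : (0:ℝ) < Real.sqrt 2 := Real.sqrt_pos.2 (by norm_num)
  have hx0pos : (0:ℝ) < x₀ := lt_of_lt_of_le (by positivity) hx₀
  have hxpos : (0:ℝ) < x := hx0pos.trans hx
  have hx2 : (1:ℝ)/2 ≤ x^2 := by
    have h1 : (1 / Real.sqrt 2)^2 = 1/2 := by
      rw [div_pow, Real.sq_sqrt (by norm_num : (0:ℝ) ≤ 2)]; norm_num
    have h2 : (1 / Real.sqrt 2)^2 ≤ x^2 :=
      pow_le_pow_left₀ (by positivity) (hx₀.trans hx.le) 2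
    linarith
  set ψ := Ψ x with hψdef
  have hψ : 0 < ψ := hΨpos x hx
  set y := ψ / x^2 with hy
  have hypos : 0 < y := by positivity
  have hyψ : y ≤ 2 * ψ := by
    rw [hy, div_le_iff₀ (by positivity)]
    nlinarith
  have hb0 : 0 < b := hc0.trans_le hcb
  have ha0 : 0 < a := hb0.trans_le hba
  set A := Real.sqrt (a^2 + y) with hA
  set B := Real.sqrt (b^2 + y) with hB
  have hA2 : A^2 = a^2 + y := Real.sq_sqrt (by positivity)
  have hB2 : B^2 = b^2 + y := Real.sq_sqrt (by positivity)
  have haA : a ≤ A := by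
    have := Real.sqrt_le_sqrt (show a^2 ≤ a^2 + y by linarith)
    rwa [Real.sqrt_sq ha0.le] at this
  have hbB : b ≤ B := by
    have := Real.sqrt_le_sqrt (show b^2 ≤ b^2 + y by linarith)
    rwa [Real.sqrt_sq hb0.le] at this
  have hc2 : (0:ℝ) < c^2 := by positivity
  set z := y / c with hz
  have hzc : z * c = y := div_mul_cancel₀ y (ne_of_gt hc0)
  set q := ψ / c^2 with hq
  have hqc : q * c^2 = ψ := div_mul_cancel₀ ψ (ne_of_gt hc2)
  have hq0 : 0 < q := by positivity
  have hz0 : 0 < z := by positivity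
  have hAa2 : A ≤ a + z / 2 := by
    nlinarith [mul_nonneg (sub_nonneg.2 haA)
      (show (0:ℝ) ≤ A + a - 2*c by linarith), hA2, hzc, hc0]
  have hBb2 : B ≤ b + z / 2 := by
    nlinarith [mul_nonneg (sub_nonneg.2 hbB)
      (show (0:ℝ) ≤ B + b - 2*c by linarith), hB2, hzc, hc0]
  have hFab : F a x - F b x
      = ((-(1 - ψ) * a + A) - (-(1 - ψ) * b + B)) / ψ := by
    rw [hF, hF, div_sub_div_same]
  have hBA : B ≤ A := by
    rw [hA, hB]
    exact Real.sqrt_le_sqrt (by nlinarith)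
  -- key lower estimate: (a-b)*(1-q) ≤ A - B
  have key : (a - b) * (1 - q) ≤ A - B := by
    rcases le_or_gt (1 - q) 0 with h | h
    · linarith [mul_nonpos_of_nonneg_of_nonpos (sub_nonneg.2 hba) h]
    · have hAB : 0 < A + B := by linarith
      have hz2 : z ≤ 2 * q * c := by nlinarith
      have h4 : (1 - q) * (a + b + z) ≤ a + b := by
        nlinarith [hz2, mul_le_mul_of_nonneg_left
          (show 2*c ≤ a + b by linarith) hq0.le, mul_nonneg hq0.le hz0.le]
      have h1 : (1 - q) * (A + B) ≤ a + b := by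
        have h2 : A + B ≤ a + b + z := by linarith
        have h3 : (1 - q) * (A + B) ≤ (1 - q) * (a + b + z) :=
          mul_le_mul_of_nonneg_left h2 h.le
        linarith
      have h5 : (A - B) * (A + B) = (a - b) * (a + b) := by
        linear_combination hA2 - hB2
      have h6 : (a - b) * ((1 - q) * (A + B)) ≤ (a - b) * (a + b) :=
        mul_le_mul_of_nonneg_left h1 (by linarith)
      have h7 : ((a - b) * (1 - q)) * (A + B) ≤ (A - B) * (A + B) := by
        rw [h5]; linarith [h6]
      exact le_of_mul_le_mul_right h7 hAB
  constructor
  · rw [hFab, le_div_iff₀ hψ]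
    have hψab : 0 ≤ (a - b) * ψ := mul_nonneg (by linarith) hψ.le
    calc -(1 / c ^ 2) * (a - b) * ψ = -(q * (a-b)) := by rw [hq]; ring
      _ ≤ _ := by nlinarith [key, hψab]
  · rw [hFab, div_le_iff₀ hψ]
    have h1 : a^2 + y ≤ (B + (a - b))^2 := by nlinarith [hB2, hbB, hba]
    have hABd : A ≤ B + (a - b) := by
      rw [hA]
      calc Real.sqrt (a^2 + y) ≤ Real.sqrt ((B + (a-b))^2) := Real.sqrt_le_sqrt h1
        _ = B + (a - b) := Real.sqrt_sq (by linarith)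
    linarith [hABd]
end

section
/- On the Schwarzschild exterior (Ω² = 1 − 2m/r), for any future-directed null momentum at radius r ≥ 2m with p^r ≤ 0, defining the trapping parameter t by E² − L²/(27 m²) = t E² (for E > 0), one has the two-sided bound c (m²/r²)(1 − t) E ≤ p^{t*} ≤ C (1 + (m²/r²)|t|) E for universal constants 0 < c < C. In particular in the region r ≥ (2+δ)m one has p^{t*} ≤ C(δ) E. -/
set_option maxHeartbeats 800000

lemma schw_key (m r pt pr q2 E : ℝ)
    (hshell : -(1 - 2 * m / r) * pt ^ 2 + 2 * (1 - (1 - 2 * m / r)) * pt * pr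
          + (2 - (1 - 2 * m / r)) * pr ^ 2 + q2 = 0)
    (hE : E = (1 - 2 * m / r) * pt - (2 * m / r) * pr) :
    (E - pr) * (pt + pr) = q2 := by
  rw [hE]; linear_combination -hshell

/-- On the Schwarzschild exterior (`Ω² = 1 − 2m/r`), for any future-directed null
momentum at radius `r ≥ 2m` with `p^r ≤ 0`, defining the trapping parameter `t` by
`E² − L²/(27 m²) = t E²` (for `E > 0`), there are universal constants `0 < c < C` with
`c (m²/r²)(1 − t) E ≤ p^{t*} ≤ C (1 + (m²/r²)|t|) E`. In particular, for each `δ > 0`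
there is `C(δ) > 0` such that in the region `r ≥ (2 + δ)m` one has `p^{t*} ≤ C(δ) E`. -/
theorem schwarzschild_ptstar_twosided_bound :
    (∃ c C : ℝ, 0 < c ∧ c < C ∧
      ∀ m r pt pr q2 E L2 t : ℝ, 0 < m → 2 * m ≤ r → 0 ≤ q2 →
        -(1 - 2 * m / r) * pt ^ 2 + 2 * (1 - (1 - 2 * m / r)) * pt * pr
          + (2 - (1 - 2 * m / r)) * pr ^ 2 + q2 = 0 →
        E = (1 - 2 * m / r) * pt - (2 * m / r) * pr →
        L2 = r ^ 2 * q2 → pr ≤ 0 → 0 < E →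
        E ^ 2 - L2 / (27 * m ^ 2) = t * E ^ 2 →
        c * (m ^ 2 / r ^ 2) * (1 - t) * E ≤ pt ∧
          pt ≤ C * (1 + (m ^ 2 / r ^ 2) * |t|) * E) ∧
    (∀ δ : ℝ, 0 < δ → ∃ Cδ : ℝ, 0 < Cδ ∧
      ∀ m r pt pr q2 E L2 t : ℝ, 0 < m → (2 + δ) * m ≤ r → 0 ≤ q2 →
        -(1 - 2 * m / r) * pt ^ 2 + 2 * (1 - (1 - 2 * m / r)) * pt * pr
          + (2 - (1 - 2 * m / r)) * pr ^ 2 + q2 = 0 →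
        E = (1 - 2 * m / r) * pt - (2 * m / r) * pr →
        L2 = r ^ 2 * q2 → pr ≤ 0 → 0 < E →
        E ^ 2 - L2 / (27 * m ^ 2) = t * E ^ 2 →
        pt ≤ Cδ * E) := by
  constructor
  · refine ⟨1, 28, one_pos, by norm_num, ?_⟩
    intro m r pt pr q2 E L2 t hm hrm hq2 hshell hE hL2 hpr hEpos ht
    have hr : 0 < r := by linarith
    have key := schw_key m r pt pr q2 E hshell hE
    have hEpr : 0 < E - pr := by linarith
    have hsum : 0 ≤ pt + pr := by
      by_contra h
      push_neg at h
      nlinarith [mul_pos hEpr (show 0 < -(pt + pr) by linarith)]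
    have hpt0 : 0 ≤ pt := by linarith
    have h1u : 0 ≤ 1 - 2 * m / r := by
      rw [sub_nonneg, div_le_one hr]; linarith
    have hEpr2 : 0 ≤ E + pr := by
      rw [hE]; linarith [mul_nonneg h1u hsum]
    have h4m : 4 * m ^ 2 ≤ r ^ 2 := by nlinarith
    subst hL2
    have hL : r ^ 2 * q2 = 27 * m ^ 2 * (1 - t) * E ^ 2 := by
      field_simp at ht
      linarith
    constructor
    · rcases le_or_gt (1 - t) 0 with hc | hc
      · have h0 : (0:ℝ) ≤ m ^ 2 / r ^ 2 * E := by positivity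
        linarith [mul_nonpos_of_nonneg_of_nonpos h0 hc, hpt0]
      · have hq_le : q2 ≤ 2 * E * pt := by
          linarith [key, mul_nonneg hEpr.le (neg_nonneg.2 hpr),
            mul_nonneg hpt0 hEpr2]
        have hlow : 2 * m ^ 2 * (1 - t) * E ^ 2 ≤ 2 * E * pt * r ^ 2 := by
          linarith [hL, mul_le_mul_of_nonneg_left hq_le (sq_nonneg r),
            mul_nonneg (mul_nonneg (sq_nonneg m) hc.le) (sq_nonneg E)]
        have hmain : (1 * (m ^ 2 / r ^ 2) * (1 - t) * E) * (2 * E * r ^ 2)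
            ≤ pt * (2 * E * r ^ 2) := by
          have hexp : (1 * (m ^ 2 / r ^ 2) * (1 - t) * E) * (2 * E * r ^ 2)
              = 2 * m ^ 2 * (1 - t) * E ^ 2 := by
            field_simp
          rw [hexp]; linarith [hlow]
        exact le_of_mul_le_mul_right hmain (by positivity)
    · have hEq : pt * E ≤ E ^ 2 + q2 := by
        linarith [key, mul_nonneg hEpos.le hEpr2,
          mul_nonneg (neg_nonneg.2 hpr) hsum]
      have hup2 : pt * E * r ^ 2 ≤ E ^ 2 * r ^ 2 + 27 * m ^ 2 * (1 - t) * E ^ 2 := by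
        linarith [mul_le_mul_of_nonneg_right hEq (sq_nonneg r), hL]
      have hfin : pt * (E * r ^ 2) ≤ (28 * (1 + m ^ 2 / r ^ 2 * |t|) * E) * (E * r ^ 2) := by
        have hexp : (28 * (1 + m ^ 2 / r ^ 2 * |t|) * E) * (E * r ^ 2)
            = 28 * E ^ 2 * r ^ 2 + 28 * m ^ 2 * |t| * E ^ 2 := by
          field_simp
        rw [hexp]
        linarith [hup2,
          mul_le_mul_of_nonneg_right (neg_le_abs t) (by positivity : (0:ℝ) ≤ m ^ 2 * E ^ 2),
          mul_le_mul_of_nonneg_right h4m (sq_nonneg E),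
          mul_nonneg (mul_nonneg (sq_nonneg m) (abs_nonneg t)) (sq_nonneg E),
          mul_nonneg (sq_nonneg r) (sq_nonneg E)]
      exact le_of_mul_le_mul_right hfin (by positivity)
  · intro δ hδ
    refine ⟨(2 + δ) / δ, by positivity, ?_⟩
    intro m r pt pr q2 E L2 t hm hrm hq2 hshell hE hL2 hpr hEpos ht
    have hr : 0 < r := by nlinarith
    have key := schw_key m r pt pr q2 E hshell hE
    have hEpr : 0 < E - pr := by linarith
    have hsum : 0 ≤ pt + pr := by
      by_contra h
      push_neg at h
      nlinarith [mul_pos hEpr (show 0 < -(pt + pr) by linarith)]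
    have hpt0 : 0 ≤ pt := by linarith
    have h2 : (1 - 2 * m / r) * pt ≤ E := by
      rw [hE]
      have : (2 * m / r) * pr ≤ 0 :=
        mul_nonpos_of_nonneg_of_nonpos (by positivity) hpr
      linarith
    have h3 : δ ≤ (2 + δ) * (1 - 2 * m / r) := by
      have h5 : (2 + δ) * (1 - 2 * m / r) = (2 + δ) - (2 + δ) * (2 * m) / r := by
        ring
      have h6 : (2 + δ) * (2 * m) / r ≤ 2 := by
        rw [div_le_iff₀ hr]; nlinarith
      rw [h5]; linarith
    have hkey : δ * pt ≤ (2 + δ) * E := by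
      linarith [mul_le_mul_of_nonneg_right h3 hpt0,
        mul_le_mul_of_nonneg_left h2 (show (0:ℝ) ≤ 2 + δ by linarith)]
    rw [div_mul_eq_mul_div, le_div_iff₀ hδ]
    linarith
end
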